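/- Let G be a variable-regular Tanner graph with variable degree d_v = 3 and girth g ≥ 8. Then every nonempty stopping set S (a set of variable nodes such that every check node in the induced subgraph G(S) has degree at least 2) in which all check nodes of G(S) have degree exactly 2 satisfies |S| ≥ 6. -/

import Mathlib

/-!
Every variable node of an elementary stopping set `S` shares each of its three checks with
exactly one other node of `S`. Joining such pairs gives the normal graph on `S`: girth ≥ 8
rules out 4-cycles of the Tanner graph, so the three partners of a node are distinct and the
normal graph is 3-regular, and it rules out 6-cycles, so the normal graph is triangle-free.
Two adjacent nodes of a triangle-free graph have disjoint neighbourhoods, hence `|S| ≥ 3 + 3`.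
-/

/-- Degree of a variable node `v` in the Tanner graph given by adjacency `adj`. -/
def varDeg {V C : Type*} [Fintype C] (adj : V → C → Prop) [∀ v c, Decidable (adj v c)] (v : V) : ℕ :=
  (Finset.univ.filter (fun c => adj v c)).card

/-- Degree of a check node `c` in the subgraph induced by the set `S` of variable nodes. -/
def chkDeg {V C : Type*} [DecidableEq V] (adj : V → C → Prop) [∀ v c, Decidable (adj v c)]
    (S : Finset V) (c : C) : ℕ :=
  (S.filter (fun v => adj v c)).card

/-- The set of check nodes of odd degree in the subgraph induced by `S`. -/
def oddChks {V C : Type*} [DecidableEq V] [Fintype C] (adj : V → C → Prop) [∀ v c, Decidable (adj v c)]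
    (S : Finset V) : Finset C :=
  Finset.univ.filter (fun c => Odd (chkDeg adj S c))

/-- The Tanner graph of the adjacency relation `adj`, as a simple graph on `V ⊕ C`. -/
def tanner {V C : Type*} (adj : V → C → Prop) : SimpleGraph (V ⊕ C) where
  Adj x y := (∃ v c, x = Sum.inl v ∧ y = Sum.inr c ∧ adj v c) ∨
    (∃ v c, x = Sum.inr c ∧ y = Sum.inl v ∧ adj v c)
  symm := by
    constructor
    rintro x y (⟨v, c, h1, h2, h3⟩ | ⟨v, c, h1, h2, h3⟩)
    · exact Or.inr ⟨v, c, h2, h1, h3⟩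
    · exact Or.inl ⟨v, c, h2, h1, h3⟩
  loopless := by
    constructor
    rintro x (⟨v, c, h1, h2, _⟩ | ⟨v, c, h1, h2, _⟩) <;> subst h1 <;> simp at h2

namespace SimpleGraph

theorem degree_add_degree_le_card_of_cliqueFree_three {α : Type*} [Fintype α]
    {G : SimpleGraph α} [DecidableRel G.Adj] (h : G.CliqueFree 3) {u v : α} (huv : G.Adj u v) :
    G.degree u + G.degree v ≤ Fintype.card α := by
  classical
  have hdisj : Disjoint (G.neighborFinset u) (G.neighborFinset v) := by
    refine Finset.disjoint_left.mpr fun w hu hv => h {u, v, w} ?_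
    rw [mem_neighborFinset] at hu hv
    exact is3Clique_triple_iff.mpr ⟨huv, hu, hv⟩
  rw [← card_neighborFinset_eq_degree, ← card_neighborFinset_eq_degree,
    ← Finset.card_union_of_disjoint hdisj]
  exact Finset.card_le_univ _

end SimpleGraph

open SimpleGraph

section TannerGraph

variable {V C : Type*} (adj : V → C → Prop)

theorem tanner_adj_inl_inr {v : V} {c : C} (h : adj v c) :
    (tanner adj).Adj (Sum.inl v) (Sum.inr c) :=
  Or.inl ⟨v, c, rfl, rfl, h⟩

theorem tanner_adj_inr_inl {v : V} {c : C} (h : adj v c) :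
    (tanner adj).Adj (Sum.inr c) (Sum.inl v) :=
  Or.inr ⟨v, c, rfl, rfl, h⟩

theorem tanner_egirth_le_four {v u : V} {c c' : C} (hvu : v ≠ u) (hcc' : c ≠ c')
    (hvc : adj v c) (huc : adj u c) (huc' : adj u c') (hvc' : adj v c') :
    (tanner adj).egirth ≤ 4 := by
  let w : (tanner adj).Walk (Sum.inl v) (Sum.inl v) :=
    .cons (tanner_adj_inl_inr adj hvc) <| .cons (tanner_adj_inr_inl adj huc) <|
    .cons (tanner_adj_inl_inr adj huc') <| .cons (tanner_adj_inr_inl adj hvc') .nil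
  have hw : w.IsCycle := by
    simp [w, Walk.isCycle_def, Walk.isTrail_def, hvu, hcc', hvu.symm]
  exact egirth_le_length hw

theorem tanner_egirth_le_six {v u x : V} {c₁ c₂ c₃ : C}
    (hvu : v ≠ u) (hvx : v ≠ x) (hux : u ≠ x)
    (h₁₂ : c₁ ≠ c₂) (h₁₃ : c₁ ≠ c₃) (h₂₃ : c₂ ≠ c₃)
    (hvc₁ : adj v c₁) (huc₁ : adj u c₁) (huc₂ : adj u c₂) (hxc₂ : adj x c₂)
    (hxc₃ : adj x c₃) (hvc₃ : adj v c₃) :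
    (tanner adj).egirth ≤ 6 := by
  let w : (tanner adj).Walk (Sum.inl v) (Sum.inl v) :=
    .cons (tanner_adj_inl_inr adj hvc₁) <| .cons (tanner_adj_inr_inl adj huc₁) <|
    .cons (tanner_adj_inl_inr adj huc₂) <| .cons (tanner_adj_inr_inl adj hxc₂) <|
    .cons (tanner_adj_inl_inr adj hxc₃) <| .cons (tanner_adj_inr_inl adj hvc₃) .nil
  have hw : w.IsCycle := by
    simp [w, Walk.isCycle_def, Walk.isTrail_def, hvu, hvx, hux, h₁₂, h₁₃, h₂₃, hvu.symm,
      hvx.symm]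
  exact egirth_le_length hw

end TannerGraph

section NormalGraph

variable {V C : Type*} [DecidableEq V] (adj : V → C → Prop) [∀ v c, Decidable (adj v c)]
  (S : Finset V)

def IsStoppingSet : Prop := ∀ c : C, chkDeg adj S c ≠ 1

def normalGraph : SimpleGraph S where
  Adj u w := u ≠ w ∧ ∃ c, adj u c ∧ adj w c
  symm := ⟨fun _ _ ⟨hne, c, hu, hw⟩ => ⟨hne.symm, c, hw, hu⟩⟩
  loopless := ⟨fun _ h => h.1 rfl⟩

instance [Fintype C] : DecidableRel (normalGraph adj S).Adj := fun u w =>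
  inferInstanceAs (Decidable (u ≠ w ∧ ∃ c, adj u c ∧ adj w c))

variable {adj S}

theorem three_le_chkDeg {c : C} {a b d : V} (ha : a ∈ S) (hb : b ∈ S) (hd : d ∈ S)
    (hab : a ≠ b) (had : a ≠ d) (hbd : b ≠ d)
    (hac : adj a c) (hbc : adj b c) (hdc : adj d c) :
    3 ≤ chkDeg adj S c := by
  have hsub : ({a, b, d} : Finset V) ⊆ S.filter (adj · c) := by
    simp [Finset.insert_subset_iff, ha, hb, hd, hac, hbc, hdc]
  calc 3 = ({a, b, d} : Finset V).card :=
        (Finset.card_eq_three.mpr ⟨a, b, d, hab, had, hbd, rfl⟩).symm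
    _ ≤ chkDeg adj S c := Finset.card_le_card hsub

theorem IsStoppingSet.exists_normalGraph_adj (hS : IsStoppingSet adj S) {v : S} {c : C}
    (hvc : adj v c) : ∃ u, (normalGraph adj S).Adj v u ∧ adj u c := by
  have hv : (v : V) ∈ S.filter (adj · c) := Finset.mem_filter.mpr ⟨v.2, hvc⟩
  have hdeg : 1 < chkDeg adj S c := lt_of_le_of_ne (Finset.card_pos.mpr ⟨_, hv⟩) (hS c).symm
  obtain ⟨u, hu, huv⟩ := Finset.exists_mem_ne hdeg v
  rw [Finset.mem_filter] at hu
  exact ⟨⟨u, hu.1⟩, ⟨fun h => huv (congrArg Subtype.val h).symm, c, hvc, hu.2⟩, hu.2⟩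

theorem IsStoppingSet.varDeg_le_degree_normalGraph [Fintype C]
    (hgirth : 4 < (tanner adj).egirth) (hS : IsStoppingSet adj S) (v : S) :
    varDeg adj v ≤ (normalGraph adj S).degree v := by
  have : Nonempty S := ⟨v⟩
  choose! partner hpartner using fun c (hc : c ∈ Finset.univ.filter (adj v ·)) =>
    hS.exists_normalGraph_adj (Finset.mem_filter.mp hc).2
  rw [varDeg, ← card_neighborFinset_eq_degree]
  refine Finset.card_le_card_of_injOn partner
    (fun c hc => (mem_neighborFinset _ _ _).mpr (hpartner c hc).1) fun c hc c' hc' hcc' => ?_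
  by_contra hne
  have hvc := (Finset.mem_filter.mp hc).2
  have hvc' := (Finset.mem_filter.mp hc').2
  obtain ⟨⟨hvu, -⟩, huc⟩ := hpartner c hc
  have huc' := hcc' ▸ (hpartner c' hc').2
  exact (tanner_egirth_le_four adj (Subtype.coe_ne_coe.mpr hvu) hne hvc huc huc' hvc').not_gt
    hgirth

theorem normalGraph_cliqueFree_three (hgirth : 6 < (tanner adj).egirth)
    (hdeg : ∀ c, chkDeg adj S c ≤ 2) : (normalGraph adj S).CliqueFree 3 := by
  intro t ht
  obtain ⟨a, b, d, ⟨hab, c₁, hac₁, hbc₁⟩, ⟨had, c₃, hac₃, hdc₃⟩, ⟨hbd, c₂, hbc₂, hdc₂⟩, -⟩ :=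
      is3Clique_iff.mp ht
  replace hab := Subtype.coe_ne_coe.mpr hab
  replace had := Subtype.coe_ne_coe.mpr had
  replace hbd := Subtype.coe_ne_coe.mpr hbd
  have not_common (c : C) (ha : adj a c) (hb : adj b c) (hd : adj d c) : False := by
    have := three_le_chkDeg a.2 b.2 d.2 hab had hbd ha hb hd
    have := hdeg c
    omega
  have h₁₂ : c₁ ≠ c₂ := by rintro rfl; exact not_common c₁ hac₁ hbc₁ hdc₂
  have h₁₃ : c₁ ≠ c₃ := by rintro rfl; exact not_common c₁ hac₁ hbc₁ hdc₃
  have h₂₃ : c₂ ≠ c₃ := by rintro rfl; exact not_common c₂ hac₃ hbc₂ hdc₂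
  have := tanner_egirth_le_six adj hab had hbd h₁₂ h₁₃ h₂₃ hac₁ hbc₁ hbc₂ hdc₂ hdc₃ hac₃
  exact this.not_gt hgirth

end NormalGraph

/-- In a variable-regular Tanner graph with variable degree 3 and girth ≥ 8,
every nonempty elementary stopping set (all check nodes of `G(S)` have degree exactly 2)
has size at least 6. -/
theorem ess_size_ge_six {V C : Type*} [Fintype C] [DecidableEq V]
    (adj : V → C → Prop) [∀ v c, Decidable (adj v c)]
    (hreg : ∀ v : V, varDeg adj v = 3)
    (hgirth : (8 : ℕ∞) ≤ (tanner adj).egirth)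
    (S : Finset V) (hne : S.Nonempty)
    (helem : ∀ c : C, chkDeg adj S c = 0 ∨ chkDeg adj S c = 2) :
    6 ≤ S.card := by
  have hS : IsStoppingSet adj S := fun c => by rcases helem c with h | h <;> omega
  have hdeg (v : S) : 3 ≤ (normalGraph adj S).degree v :=
    hreg v ▸ hS.varDeg_le_degree_normalGraph (lt_of_lt_of_le (by norm_num) hgirth) v
  have htri : (normalGraph adj S).CliqueFree 3 :=
    normalGraph_cliqueFree_three (lt_of_lt_of_le (by norm_num) hgirth) fun c => by
      rcases helem c with h | h <;> omega
  obtain ⟨v, hv⟩ := hne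
  obtain ⟨u, hvu⟩ := ((normalGraph adj S).degree_pos_iff_exists_adj ⟨v, hv⟩).mp
    (lt_of_lt_of_le (by norm_num) (hdeg _))
  calc 6 ≤ (normalGraph adj S).degree ⟨v, hv⟩ + (normalGraph adj S).degree u :=
        add_le_add (hdeg _) (hdeg _)
    _ ≤ Fintype.card S := degree_add_degree_le_card_of_cliqueFree_three htri hvu
    _ = S.card := Fintype.card_coe S
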